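/- Let (L₁, …, L_h; w₁, …, w_h) be a vertex hierarchy of height h on the weighted graph G = (V, w₁). Then for every 1 ≤ i ≤ h and all u, v ∈ V_i, dist_{w_i}(u,v) = dist_G(u,v). -/

import Mathlib

/-!
Induction on the level. Passing from `w_i` to `w_{i+1}` deletes the independent set `L_i` and
adds augmenting edges. On a walk of `w_i` between survivors every deleted vertex sits between
two survivors, so each detour `a – x – c` through `L_i` can be replaced by the augmenting edge
`a – c`, which is no heavier. Conversely, every edge of `w_{i+1}` weighs as much as an edge or
a two-edge path through `L_i` in `w_i`, so walks of `w_{i+1}` expand back into walks of `w_i`.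
-/

namespace ISLabel

variable {V : Type*}

/-- Two vertices are adjacent in the weighted graph `w` when they are distinct and
joined by an edge of finite weight. -/
def Adj (w : V → V → ℕ∞) (u v : V) : Prop := u ≠ v ∧ w u v < ⊤

/-- `p` is a walk from `u` to `v` in the weighted graph `w`: a nonempty list of
vertices starting at `u`, ending at `v`, with consecutive vertices adjacent. -/
def IsWalk (w : V → V → ℕ∞) (u v : V) (p : List V) : Prop :=
  p ≠ [] ∧ p.head? = some u ∧ p.getLast? = some v ∧ p.Chain' (Adj w)

/-- The length of a list of vertices: the sum of `f` over consecutive pairs. -/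
def pathLen (f : V → V → ℕ∞) (p : List V) : ℕ∞ :=
  ((p.zip p.tail).map fun e => f e.1 e.2).sum

/-- The distance from `u` to `v` in `w`: the infimum of the lengths of all walks
from `u` to `v` (`⊤` if there is no such walk). -/
noncomputable def wdist (w : V → V → ℕ∞) (u v : V) : ℕ∞ :=
  ⨅ p : {p : List V // IsWalk w u v p}, pathLen w p.1

/-- `I` is an independent set in `w`. -/
def IsIndep (w : V → V → ℕ∞) (I : Set V) : Prop :=
  ∀ u ∈ I, ∀ v ∈ I, ¬ Adj w u v

/-- `w` is a weighted undirected graph: symmetric, and every off-diagonal value is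
either `⊤` (no edge) or a weight `≥ 1`. -/
def IsWGraph (w : V → V → ℕ∞) : Prop :=
  (∀ u v, w u v = w v u) ∧ ∀ u v, u ≠ v → 1 ≤ w u v

/-- `w` is supported on `S`: all weights touching a vertex outside `S` are `⊤`. -/
def SupportedOn (w : V → V → ℕ∞) (S : Set V) : Prop :=
  ∀ u v, u ∉ S ∨ v ∉ S → w u v = ⊤

/-- `VsetOf L i` is the vertex set `V_i = V ∖ (L₁ ∪ … ∪ L_{i-1})`. -/
def VsetOf (L : ℕ → Set V) (i : ℕ) : Set V := {v | ∀ j, 1 ≤ j → j < i → v ∉ L j}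

/-- A vertex hierarchy of height `h ≥ 1` on the weighted graph `w 1`:
pairwise disjoint independent levels `L 1, …, L h` covering `V`, and graphs
`w i` supported on `V_i` obtained by the augmenting-edge construction. -/
structure VertexHierarchy (V : Type*) (h : ℕ) where
  L : ℕ → Set V
  w : ℕ → V → V → ℕ∞
  h_pos : 1 ≤ h
  wgraph : ∀ i, 1 ≤ i → i ≤ h → IsWGraph (w i)
  disj : ∀ i j, 1 ≤ i → i ≤ h → 1 ≤ j → j ≤ h → i ≠ j → ∀ v, v ∈ L i → v ∉ L j
  cover : ∀ v : V, ∃ i, 1 ≤ i ∧ i ≤ h ∧ v ∈ L i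
  supported : ∀ i, 1 ≤ i → i ≤ h → SupportedOn (w i) (VsetOf L i)
  aug : ∀ i, 2 ≤ i → i ≤ h → ∀ u v : V, u ≠ v → u ∈ VsetOf L i → v ∈ VsetOf L i →
    w i u v = min (w (i - 1) u v) (⨅ x ∈ L (i - 1), w (i - 1) u x + w (i - 1) x v)
  indep : ∀ i, 1 ≤ i → i ≤ h → IsIndep (w i) (L i)

/-- The level `ℓ(v)`: the unique `i` with `1 ≤ i ≤ h` and `v ∈ L i`. -/
noncomputable def level {h : ℕ} (H : VertexHierarchy V h) (v : V) : ℕ :=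
  sInf {i | 1 ≤ i ∧ i ≤ h ∧ v ∈ H.L i}

variable {w w' : V → V → ℕ∞} {S I : Set V} {u v a b : V} {p q : List V}

@[simp]
lemma pathLen_singleton (f : V → V → ℕ∞) (a : V) : pathLen f [a] = 0 := by
  simp [pathLen]

@[simp]
lemma pathLen_cons_cons (f : V → V → ℕ∞) (a b : V) (l : List V) :
    pathLen f (a :: b :: l) = f a b + pathLen f (b :: l) := by
  simp [pathLen]

lemma isWalk_iff :
    IsWalk w u v p ↔ p ≠ [] ∧ p.head? = some u ∧ p.getLast? = some v ∧ p.IsChain (Adj w) :=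
  Iff.rfl

lemma isWalk_singleton : IsWalk w u v [a] ↔ u = a ∧ v = a := by
  simp [isWalk_iff, eq_comm]

lemma isWalk_cons_cons {l : List V} :
    IsWalk w u v (a :: b :: l) ↔ u = a ∧ Adj w a b ∧ IsWalk w b v (b :: l) := by
  simp [isWalk_iff, List.getLast?_cons_cons, eq_comm, and_left_comm]

lemma IsWalk.exists_eq_cons (hp : IsWalk w u v p) : ∃ t, p = u :: t := by
  obtain ⟨-, hh, -, -⟩ := hp
  match p, hh with
  | x :: t, hh => exact ⟨t, by simp_all⟩

lemma IsWalk.cons (hab : Adj w a b) (hq : IsWalk w b v q) : IsWalk w a v (a :: q) := by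
  obtain ⟨t, rfl⟩ := hq.exists_eq_cons
  exact isWalk_cons_cons.mpr ⟨rfl, hab, hq⟩

lemma IsWalk.pathLen_cons (f : V → V → ℕ∞) (hq : IsWalk w b v q) :
    pathLen f (a :: q) = f a b + pathLen f q := by
  obtain ⟨t, rfl⟩ := hq.exists_eq_cons
  exact pathLen_cons_cons f a b t

/-- Concatenation of walks; the tail drops the repeated junction vertex. -/
lemma IsWalk.append_tail {m : V} (hp : IsWalk w u m p) (hq : IsWalk w m v q) :
    IsWalk w u v (p ++ q.tail) ∧ pathLen w (p ++ q.tail) = pathLen w p + pathLen w q := by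
  induction p generalizing u with
  | nil => exact absurd rfl hp.1
  | cons a l ih =>
    cases l with
    | nil =>
      obtain ⟨rfl, rfl⟩ := isWalk_singleton.mp hp
      obtain ⟨t, rfl⟩ := hq.exists_eq_cons
      simpa using hq
    | cons b l =>
      obtain ⟨rfl, hab, hp'⟩ := isWalk_cons_cons.mp hp
      obtain ⟨hwalk, hlen⟩ := ih hp'
      refine ⟨hwalk.cons hab, ?_⟩
      rw [List.cons_append, hwalk.pathLen_cons, hlen, pathLen_cons_cons, add_assoc]

lemma wdist_le_pathLen (hp : IsWalk w u v p) : wdist w u v ≤ pathLen w p :=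
  iInf_le (fun q : {q : List V // IsWalk w u v q} => pathLen w q.1) ⟨p, hp⟩

lemma wdist_le_wdist_of_forall_exists_walk
    (h : ∀ p, IsWalk w' u v p → ∃ q, IsWalk w u v q ∧ pathLen w q ≤ pathLen w' p) :
    wdist w u v ≤ wdist w' u v :=
  le_iInf fun ⟨p, hp⟩ =>
    let ⟨_, hq, hle⟩ := h p hp
    (wdist_le_pathLen hq).trans hle

lemma IsWalk.exists_walk_le_of_forall_adj
    (hadj : ∀ a b, Adj w' a b → ∃ q, IsWalk w a b q ∧ pathLen w q ≤ w' a b)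
    (hp : IsWalk w' u v p) : ∃ q, IsWalk w u v q ∧ pathLen w q ≤ pathLen w' p := by
  induction p generalizing u with
  | nil => exact absurd rfl hp.1
  | cons a l ih =>
    cases l with
    | nil =>
      obtain ⟨rfl, rfl⟩ := isWalk_singleton.mp hp
      exact ⟨[_], isWalk_singleton.mpr ⟨rfl, rfl⟩, by simp⟩
    | cons b l =>
      obtain ⟨rfl, hab, hp'⟩ := isWalk_cons_cons.mp hp
      obtain ⟨q₁, hq₁, hle₁⟩ := hadj u b hab
      obtain ⟨q₂, hq₂, hle₂⟩ := ih hp'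
      obtain ⟨hwalk, hlen⟩ := hq₁.append_tail hq₂
      exact ⟨_, hwalk, hlen ▸ pathLen_cons_cons w' u b l ▸ add_le_add hle₁ hle₂⟩

lemma SupportedOn.mem_of_adj (hw : SupportedOn w S) (hab : Adj w a b) : a ∈ S ∧ b ∈ S := by
  by_contra hS
  exact (hw a b (not_and_or.mp hS) ▸ hab.2).false

/-- On `S`, the graph `w'` arises from `w` by the augmenting-edge construction through `I`. -/
def IsAugmentation (w : V → V → ℕ∞) (I : Set V) (w' : V → V → ℕ∞) (S : Set V) : Prop :=
  ∀ a ∈ S, ∀ b ∈ S, a ≠ b → w' a b = min (w a b) (⨅ x ∈ I, w a x + w x b)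

namespace IsAugmentation

variable {x : V}

lemma le_left (h : IsAugmentation w I w' S) (ha : a ∈ S) (hb : b ∈ S) (hab : a ≠ b) :
    w' a b ≤ w a b :=
  h a ha b hb hab ▸ min_le_left _ _

lemma le_add (h : IsAugmentation w I w' S) (ha : a ∈ S) (hb : b ∈ S) (hab : a ≠ b)
    (hx : x ∈ I) : w' a b ≤ w a x + w x b :=
  h a ha b hb hab ▸ (min_le_right _ _).trans (iInf₂_le x hx)

lemma exists_walk_le_of_adj (h : IsAugmentation w I w' (S \ I)) (hw' : SupportedOn w' (S \ I))
    (hab : Adj w' a b) : ∃ q, IsWalk w a b q ∧ pathLen w q ≤ w' a b := by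
  obtain ⟨ha, hb⟩ := hw'.mem_of_adj hab
  have hdef := h a ha b hb hab.1
  rcases le_total (w a b) (⨅ x ∈ I, w a x + w x b) with hle | hle
  · rw [min_eq_left hle] at hdef
    exact ⟨[a, b], (isWalk_singleton.mpr ⟨rfl, rfl⟩).cons ⟨hab.1, hdef ▸ hab.2⟩, by simp [hdef]⟩
  · rw [min_eq_right hle] at hdef
    obtain ⟨x, hx, hxeq⟩ : ∃ x ∈ I, w a x + w x b = w' a b := by
      have : Nonempty I := by
        by_contra hI
        simp_all [Adj]
      obtain ⟨⟨x, hx⟩, hxeq⟩ := ciInf_mem fun x : I => w a x + w x b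
      exact ⟨x, hx, by rw [hdef, iInf_subtype']; exact hxeq⟩
    have hfin : w a x + w x b < ⊤ := hxeq ▸ hab.2
    have hax : Adj w a x := ⟨fun hax => ha.2 (hax ▸ hx), le_self_add.trans_lt hfin⟩
    have hxb : Adj w x b := ⟨fun hxb => hb.2 (hxb ▸ hx), le_add_self.trans_lt hfin⟩
    refine ⟨[a, x, b], ?_, by simp [← hxeq]⟩
    exact (isWalk_singleton.mpr ⟨rfl, rfl⟩).cons hxb |>.cons hax

theorem exists_walk_le_of_isWalk (hw : SupportedOn w S) (hI : IsIndep w I)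
    (h : IsAugmentation w I w' (S \ I)) :
    ∀ {p : List V} {u v : V}, IsWalk w u v p → u ∈ S \ I → v ∈ S \ I →
      ∃ q, IsWalk w' u v q ∧ pathLen w' q ≤ pathLen w p
  | [], _, _, hp, _, _ => absurd rfl hp.1
  | [_], _, _, hp, _, _ => by
    obtain ⟨rfl, rfl⟩ := isWalk_singleton.mp hp
    exact ⟨[_], isWalk_singleton.mpr ⟨rfl, rfl⟩, le_rfl⟩
  | a :: b :: l, u, v, hp, hu, hv => by
    obtain ⟨rfl, hab, hp'⟩ := isWalk_cons_cons.mp hp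
    have hbS : b ∈ S := (hw.mem_of_adj hab).2
    by_cases hbI : b ∉ I
    · obtain ⟨q, hq, hle⟩ := exists_walk_le_of_isWalk hw hI h hp' ⟨hbS, hbI⟩ hv
      have hedge := h.le_left hu ⟨hbS, hbI⟩ hab.1
      refine ⟨u :: q, hq.cons ⟨hab.1, hedge.trans_lt hab.2⟩, ?_⟩
      rw [hq.pathLen_cons, pathLen_cons_cons]
      exact add_le_add hedge hle
    rw [not_not] at hbI
    cases l with
    | nil =>
      obtain ⟨-, rfl⟩ := isWalk_singleton.mp hp'
      exact absurd hbI hv.2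
    | cons c l =>
      obtain ⟨-, hbc, hp''⟩ := isWalk_cons_cons.mp hp'
      have hc : c ∈ S \ I := ⟨(hw.mem_of_adj hbc).2, fun hcI => hI b hbI c hcI hbc⟩
      obtain ⟨q, hq, hle⟩ := exists_walk_le_of_isWalk hw hI h hp'' hc hv
      by_cases huc : u = c
      · subst huc
        refine ⟨q, hq, hle.trans ?_⟩
        simpa only [pathLen_cons_cons] using le_add_self.trans le_add_self
      · have hedge := h.le_add hu hc huc hbI
        refine ⟨u :: q, hq.cons ⟨huc, hedge.trans_lt (ENat.add_lt_top.mpr ⟨hab.2, hbc.2⟩)⟩, ?_⟩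
        rw [hq.pathLen_cons, pathLen_cons_cons, pathLen_cons_cons, ← add_assoc]
        exact add_le_add hedge hle

theorem wdist_eq (hw : SupportedOn w S) (hw' : SupportedOn w' (S \ I)) (hI : IsIndep w I)
    (h : IsAugmentation w I w' (S \ I)) (hu : u ∈ S \ I) (hv : v ∈ S \ I) :
    wdist w' u v = wdist w u v :=
  le_antisymm
    (wdist_le_wdist_of_forall_exists_walk fun _ hp => h.exists_walk_le_of_isWalk hw hI hp hu hv)
    (wdist_le_wdist_of_forall_exists_walk fun _ hp =>
      hp.exists_walk_le_of_forall_adj fun _ _ => h.exists_walk_le_of_adj hw')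

end IsAugmentation

lemma vsetOf_succ {L : ℕ → Set V} {i : ℕ} (hi : 1 ≤ i) : VsetOf L (i + 1) = VsetOf L i \ L i := by
  ext v
  simp only [VsetOf, Set.mem_sdiff, Set.mem_ofPred_eq]
  refine ⟨fun hv => ⟨fun j hj hji => hv j hj (by omega), hv i hi (by omega)⟩, ?_⟩
  rintro ⟨hv, hvi⟩ j hj hji
  rcases Nat.lt_succ_iff_lt_or_eq.mp hji with hji | rfl
  exacts [hv j hj hji, hvi]

lemma VertexHierarchy.isAugmentation {h i : ℕ} (H : VertexHierarchy V h) (hi : 1 ≤ i)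
    (hih : i + 1 ≤ h) :
    IsAugmentation (H.w i) (H.L i) (H.w (i + 1)) (VsetOf H.L i \ H.L i) := by
  intro a ha b hb hab
  rw [← vsetOf_succ hi] at ha hb
  simpa using H.aug (i + 1) (by omega) hih a b hab ha hb

theorem hierarchy_dist_preservation_general {h : ℕ} (H : VertexHierarchy V h) :
    ∀ i, 1 ≤ i → i ≤ h → ∀ u v, u ∈ VsetOf H.L i → v ∈ VsetOf H.L i →
      wdist (H.w i) u v = wdist (H.w 1) u v := by
  intro i hi hih
  induction i, hi using Nat.le_induction with
  | base => exact fun _ _ _ _ => rfl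
  | succ i hi ih =>
    intro u v hu hv
    have hsupp := H.supported (i + 1) (by omega) hih
    rw [vsetOf_succ hi] at hu hv hsupp
    rw [(H.isAugmentation hi hih).wdist_eq (H.supported i hi (by omega)) hsupp
      (H.indep i hi (by omega)) hu hv]
    exact ih (by omega) u v hu.1 hv.1

/-- each graph of a vertex hierarchy preserves the distances of the
original graph among its vertices. -/
theorem hierarchy_dist_preservation [Fintype V] {h : ℕ} (H : VertexHierarchy V h) :
    ∀ i, 1 ≤ i → i ≤ h → ∀ u v, u ∈ VsetOf H.L i → v ∈ VsetOf H.L i →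
      wdist (H.w i) u v = wdist (H.w 1) u v :=
  hierarchy_dist_preservation_general H

end ISLabel
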